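/- arXiv:math/0610541 — 2 statements merged into one kernel-verified Lean document; each statement's English description precedes it below -/
import Mathlib

section
/- A countable abelian group has asymptotic dimension 0 if and only if it is a torsion group. -/
noncomputable def wordDist {G : Type*} [Group G] (S : Set G) (x y : G) : ℕ :=
  sInf {n | ∃ w : List G, (∀ g ∈ w, g ∈ S ∪ S⁻¹) ∧ w.prod = x⁻¹ * y ∧ w.length = n}

/-- Asymptotic dimension `0` for the word metric of a generating set `S`. -/
def AsdimZero {G : Type*} [Group G] (S : Set G) : Prop :=
  ∀ d : ℕ, 0 < d → ∃ (ι : Type) (B : ι → Set G) (D : ℕ),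
    (∀ x : G, ∃ i, x ∈ B i) ∧
    (∀ i, ∀ x ∈ B i, ∀ y ∈ B i, wordDist S x y ≤ D) ∧
    (∀ i j, i ≠ j → ∀ x ∈ B i, ∀ y ∈ B j, d ≤ wordDist S x y)

/-! An element `a` of infinite order forbids asymptotic dimension `0` for the cyclic group it
generates: a cover by `2`-separated sets cannot separate the consecutive powers `aⁿ, aⁿ⁺¹`, which
are at distance `1`, so all powers `aⁿ` lie in one set of bounded diameter, whereas `aⁿ` is at
distance `n` from `1`. Conversely, a finitely generated torsion abelian group is finite, and a
finite group is covered by the single set of all its elements. -/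

section wordDist

variable {G : Type*} [Group G]

lemma wordDist_mul_le_one {S : Set G} {s : G} (hs : s ∈ S) (x : G) :
    wordDist S x (x * s) ≤ 1 :=
  Nat.sInf_le ⟨[s], by simp [hs], by simp, rfl⟩

lemma List.exists_prod_eq_zpow_of_forall_mem {a : G} :
    ∀ w : List G, (∀ x ∈ w, x ∈ ({a} : Set G) ∪ ({a} : Set G)⁻¹) →
      ∃ k : ℤ, w.prod = a ^ k ∧ k.natAbs ≤ w.length
  | [], _ => ⟨0, by simp⟩
  | x :: w, hw => by
    obtain ⟨k, hk, hle⟩ :=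
      List.exists_prod_eq_zpow_of_forall_mem w fun y hy ↦ hw y (List.mem_cons_of_mem _ hy)
    have hx : x = a ∨ x = a⁻¹ := by simpa [or_comm] using hw x List.mem_cons_self
    rcases hx with rfl | rfl
    · exact ⟨1 + k, by simp [hk, zpow_add], by simp only [List.length_cons]; omega⟩
    · exact ⟨-1 + k, by simp [hk, zpow_add], by simp only [List.length_cons]; omega⟩

lemma le_wordDist_one_pow {a : G} (ha : ¬IsOfFinOrder a) (n : ℕ) :
    n ≤ wordDist {a} 1 (a ^ n) := by
  refine le_csInf ⟨n, List.replicate n a, by simp +contextual, by simp, by simp⟩ ?_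
  rintro m ⟨w, hw, hprod, rfl⟩
  obtain ⟨k, hk, hle⟩ := w.exists_prod_eq_zpow_of_forall_mem hw
  have hkn : k = n := injective_zpow_iff_not_isOfFinOrder.mpr ha <| by simpa [hk] using hprod
  omega

end wordDist

section AsdimZero

variable {G : Type*} [Group G]

lemma AsdimZero.of_finite [Finite G] (S : Set G) : AsdimZero S := by
  intro d _
  obtain ⟨D, hD⟩ := (Set.finite_range fun p : G × G ↦ wordDist S p.1 p.2).bddAbove
  exact ⟨Unit, fun _ ↦ Set.univ, D, fun _ ↦ ⟨(), trivial⟩,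
    fun _ x _ y _ ↦ hD ⟨(x, y), rfl⟩, fun i j hij ↦ absurd (Subsingleton.elim i j) hij⟩

lemma AsdimZero.bddAbove_wordDist_one_pow {S : Set G} (hS : AsdimZero S) {s : G} (hs : s ∈ S) :
    BddAbove (Set.range fun n : ℕ ↦ wordDist S 1 (s ^ n)) := by
  obtain ⟨ι, B, D, hcover, hdiam, hsep⟩ := hS 2 two_pos
  choose block hblock using hcover
  have hpow : ∀ n : ℕ, s ^ n ∈ B (block 1) := by
    intro n
    induction n with
    | zero => simpa using hblock 1
    | succ n ih =>
      by_contra hn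
      have hfar :=
        hsep (block 1) (block (s ^ (n + 1))) (fun h ↦ hn (h ▸ hblock _)) _ ih _ (hblock _)
      have hnear := pow_succ s n ▸ wordDist_mul_le_one hs (s ^ n)
      omega
  exact ⟨D, by rintro _ ⟨n, rfl⟩; exact hdiam _ _ (hblock 1) _ (hpow n)⟩

lemma not_asdimZero_singleton {a : G} (ha : ¬IsOfFinOrder a) : ¬AsdimZero {a} := by
  intro h
  obtain ⟨D, hD⟩ := h.bddAbove_wordDist_one_pow rfl
  exact (le_wordDist_one_pow ha (D + 1)).not_gt (Nat.lt_succ_of_le (hD ⟨D + 1, rfl⟩))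

end AsdimZero

lemma Subgroup.closure_singleton_generator_zpowers {G : Type*} [Group G] (g : G) :
    closure {(⟨g, mem_zpowers g⟩ : zpowers g)} = ⊤ := by
  rw [eq_top_iff']
  rintro ⟨x, k, rfl⟩
  exact mem_closure_singleton.mpr ⟨k, rfl⟩

theorem countable_abelian_asdim_zero_iff_torsion_general
    (G : Type*) [CommGroup G] :
    (∀ F : Subgroup G, F.FG → ∀ T : Set F, T.Finite →
        Subgroup.closure T = ⊤ → AsdimZero T) ↔ Monoid.IsTorsion G := by
  constructor
  · intro h g
    by_contra hg
    have ha : ¬IsOfFinOrder (⟨g, Subgroup.mem_zpowers g⟩ : Subgroup.zpowers g) :=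
      fun hfin ↦ hg (by simpa using (Subgroup.zpowers g).subtype.isOfFinOrder hfin)
    exact not_asdimZero_singleton ha <| h _ ⟨{g}, by simp [Subgroup.zpowers_eq_closure]⟩ _
      (Set.finite_singleton _) (Subgroup.closure_singleton_generator_zpowers g)
  · intro htor F hF T _ _
    have : Group.FG F := (Group.fg_iff_subgroup_fg F).mpr hF
    have : Finite F := CommGroup.finite_of_fg_isMulTorsion F (htor.subgroup F)
    exact AsdimZero.of_finite T

/-- A countable abelian group has asymptotic dimension `0` (i.e. every finitely
generated subgroup has asymptotic dimension `0` in its word metric) if and only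
if it is a torsion group. -/
theorem countable_abelian_asdim_zero_iff_torsion
    (G : Type*) [CommGroup G] [Countable G] :
    (∀ F : Subgroup G, F.FG → ∀ T : Set F, T.Finite →
        Subgroup.closure T = ⊤ → AsdimZero T) ↔ Monoid.IsTorsion G :=
  countable_abelian_asdim_zero_iff_torsion_general G
end

section
/- The restricted wreath product G = (ℤ/2ℤ) ≀ ℤ (the lamplighter group) has asymptotic dimension exactly 1. -/
/-- `G` has asymptotic dimension at most `n`: uniformly bounded covers of
`d`-multiplicity at most `n + 1` for every `d > 0`. -/
def AsdimLE {G : Type*} [Group G] (S : Set G) (n : ℕ) : Prop :=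
  ∀ d : ℕ, 0 < d → ∃ (ι : Type) (B : ι → Set G) (D : ℕ),
    (∀ x : G, ∃ i, x ∈ B i) ∧
    (∀ i, ∀ x ∈ B i, ∀ y ∈ B i, wordDist S x y ≤ D) ∧
    (∀ x : G, ∃ t : Finset ι, t.card ≤ n + 1 ∧
      ∀ i, (∃ y ∈ B i, wordDist S x y ≤ d) → i ∈ t)

/-- The base group `⊕_ℤ ℤ/2ℤ`, written multiplicatively. -/
abbrev Base : Type := Multiplicative (ℤ →₀ ZMod 2)

/-- The shift action of `ℤ` on `⊕_ℤ ℤ/2ℤ`, translating coordinates. -/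
noncomputable def shiftAction : Multiplicative ℤ →* MulAut Base where
  toFun n := AddEquiv.toMultiplicative (Finsupp.domCongr (Equiv.addRight n.toAdd))
  map_one' := by
    ext f a
    simp [AddEquiv.toMultiplicative, Finsupp.domCongr]
    rfl
  map_mul' m n := by
    ext f a
    rw [MulAut.mul_apply]
    simp [AddEquiv.toMultiplicative, Finsupp.domCongr, Finsupp.equivMapDomain_apply]
    congr 1
    simp [Equiv.Perm.mul_def]
    ring

/-- The lamplighter group `(ℤ/2ℤ) ≀ ℤ = (⊕_ℤ ℤ/2ℤ) ⋊ ℤ`. -/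
abbrev Lamplighter : Type := Base ⋊[shiftAction] Multiplicative ℤ

/-!
Let `R` bound the displacement and lamp range of every generator. Then `d` steps of the word
metric move the lamplighter by at most `r = d R` and change lamps only within distance `r` of
its position. Cut `ℤ` into intervals of length `L = 2r + 1` and put two elements in the same
piece when the lamplighter stands in the same interval and their lamp configurations agree
outside the `2r`-neighbourhood of that interval. A piece has bounded diameter, since its
elements differ by one of the finitely many elements with small displacement and lamp range,
and a `d`-ball meets at most two pieces, since the positions it contains meet at most two
intervals.

Conversely, a cover witnessing `asdim = 0` at scale `1` consists of a single piece, because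
its pieces are unions of components of the Cayley graph; the group would be bounded, hence
finite.
-/

section WordDist

variable {G : Type*} [Group G] {S : Set G}

lemma wordDist_le_length {x y : G} {w : List G} (hw : ∀ g ∈ w, g ∈ S ∪ S⁻¹)
    (hprod : w.prod = x⁻¹ * y) : wordDist S x y ≤ w.length :=
  Nat.sInf_le ⟨w, hw, hprod, rfl⟩

lemma exists_list_prod_eq (hgen : Subgroup.closure S = ⊤) (g : G) :
    ∃ w : List G, (∀ x ∈ w, x ∈ S ∪ S⁻¹) ∧ w.prod = g := by
  have hg : g ∈ (Subgroup.closure S).toSubmonoid := hgen ▸ Subgroup.mem_top g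
  rw [Subgroup.closure_toSubmonoid] at hg
  exact Submonoid.exists_list_of_mem_closure hg

lemma exists_list_length_eq_wordDist (hgen : Subgroup.closure S = ⊤) (x y : G) :
    ∃ w : List G, (∀ g ∈ w, g ∈ S ∪ S⁻¹) ∧ w.prod = x⁻¹ * y ∧
      w.length = wordDist S x y := by
  obtain ⟨w, hw, hprod⟩ := exists_list_prod_eq hgen (x⁻¹ * y)
  exact Nat.sInf_mem (s := {n | ∃ w : List G, (∀ g ∈ w, g ∈ S ∪ S⁻¹) ∧ w.prod = x⁻¹ * y ∧
    w.length = n}) ⟨w.length, w, hw, hprod, rfl⟩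

lemma wordDist_eq_wordDist_one (x y : G) : wordDist S x y = wordDist S 1 (x⁻¹ * y) := by
  simp [wordDist]

lemma wordDist_self (x : G) : wordDist S x x = 0 :=
  Nat.le_zero.1 (wordDist_le_length (w := []) (by simp) (by simp))

lemma wordDist_le_one_of_mem {x y : G} (h : x⁻¹ * y ∈ S ∪ S⁻¹) : wordDist S x y ≤ 1 :=
  wordDist_le_length (w := [x⁻¹ * y]) (by simpa using h) (by simp)

lemma finite_setOf_wordDist_one_le (hS : S.Finite) (hgen : Subgroup.closure S = ⊤) (D : ℕ) :
    {g | wordDist S 1 g ≤ D}.Finite := by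
  have : Finite ↥(S ∪ S⁻¹) := (hS.union hS.inv).to_subtype
  refine ((List.finite_length_le ↥(S ∪ S⁻¹) D).image
    fun l => (l.map Subtype.val).prod).subset ?_
  intro g hg
  obtain ⟨w, hw, hprod, hlen⟩ := exists_list_length_eq_wordDist hgen 1 g
  lift w to List ↥(S ∪ S⁻¹) using hw
  exact ⟨w, by simpa [← hlen] using hg, by simpa using hprod⟩

lemma exists_wordDist_one_le_of_asdimLE_zero (hgen : Subgroup.closure S = ⊤)
    (h : AsdimLE S 0) : ∃ D, ∀ g, wordDist S 1 g ≤ D := by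
  obtain ⟨ι, B, D, hcov, hdiam, hmult⟩ := h 1 one_pos
  obtain ⟨i, hi⟩ := hcov 1
  -- a point meets at most one piece at distance `≤ 1`, so `B i` is closed under neighbours
  have hstep : ∀ x ∈ B i, ∀ y, wordDist S y x ≤ 1 → y ∈ B i := by
    intro x hx y hyx
    obtain ⟨j, hj⟩ := hcov y
    obtain ⟨t, ht, hmem⟩ := hmult y
    have hji := Finset.card_le_one.1 ht j (hmem j ⟨y, hj, by simp [wordDist_self]⟩) i
      (hmem i ⟨x, hx, hyx⟩)
    exact hji ▸ hj
  have hall : ∀ g, g ∈ B i := fun g =>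
    Subgroup.closure_induction_right (p := fun g _ => g ∈ B i) hi
      (fun x _ y hy hx => hstep x hx _ (wordDist_le_one_of_mem (Or.inr (by simpa using hy))))
      (fun x _ y hy hx => hstep x hx _ (wordDist_le_one_of_mem (Or.inl (by simpa using hy))))
      (hgen ▸ Subgroup.mem_top g)
  exact ⟨D, fun g => hdiam i 1 hi g (hall g)⟩

lemma finite_of_asdimLE_zero (hS : S.Finite) (hgen : Subgroup.closure S = ⊤)
    (h : AsdimLE S 0) : Finite G := by
  obtain ⟨D, hD⟩ := exists_wordDist_one_le_of_asdimLE_zero hgen h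
  exact Set.finite_univ_iff.1 ((finite_setOf_wordDist_one_le hS hgen D).subset fun g _ => hD g)

end WordDist

lemma mul_ediv_le_and_lt (a : ℤ) {L : ℤ} (hL : 0 < L) :
    L * (a / L) ≤ a ∧ a < L * (a / L) + L :=
  ⟨Int.mul_ediv_self_le hL.ne', Int.lt_mul_ediv_self_add hL⟩

open SemidirectProduct Multiplicative

namespace Lamplighter

noncomputable def pos (x : Lamplighter) : ℤ := x.right.toAdd

noncomputable def lamps (x : Lamplighter) : ℤ →₀ ZMod 2 := x.left.toAdd

lemma shiftAction_apply (m : Multiplicative ℤ) (f : Base) (q : ℤ) :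
    (shiftAction m f).toAdd q = f.toAdd (q - m.toAdd) :=
  Finsupp.equivMapDomain_apply _ _ _

@[simp] lemma pos_mul (x y : Lamplighter) : (x * y).pos = x.pos + y.pos := rfl

@[simp] lemma lamps_mul (x y : Lamplighter) (q : ℤ) :
    (x * y).lamps q = x.lamps q + y.lamps (q - x.pos) :=
  congrArg (x.lamps q + ·) (shiftAction_apply _ _ _)

@[simp] lemma pos_inv (x : Lamplighter) : x⁻¹.pos = -x.pos := rfl

@[simp] lemma lamps_inv (x : Lamplighter) (q : ℤ) : x⁻¹.lamps q = -x.lamps (q + x.pos) := by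
  rw [lamps, inv_left, shiftAction_apply]
  simp [lamps, pos]

@[simp] lemma pos_one : (1 : Lamplighter).pos = 0 := rfl

@[simp] lemma lamps_one : (1 : Lamplighter).lamps = 0 := rfl

noncomputable def toggle : Lamplighter := inl (ofAdd (Finsupp.single 0 1))

noncomputable def step : Lamplighter := inr (ofAdd 1)

lemma inr_ofAdd_eq_step_zpow (n : ℤ) : (inr (ofAdd n) : Lamplighter) = step ^ n := by
  rw [step, ← map_zpow, ← ofAdd_zsmul, smul_eq_mul, mul_one]

lemma inl_single_eq_conj (p : ℤ) :
    (inl (ofAdd (Finsupp.single p 1)) : Lamplighter) = step ^ p * toggle * (step ^ p)⁻¹ := by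
  rw [← inr_ofAdd_eq_step_zpow, toggle, ← map_inv, ← inl_aut]
  congr 1
  change _ = ofAdd (Finsupp.equivMapDomain _ _)
  simp [Finsupp.equivMapDomain_single]

lemma closure_toggle_step : Subgroup.closure {toggle, step} = ⊤ := by
  set H := Subgroup.closure {toggle, step}
  have hstep : ∀ n : ℤ, step ^ n ∈ H := fun n =>
    zpow_mem (Subgroup.subset_closure (by simp)) n
  have htoggle : toggle ∈ H := Subgroup.subset_closure (by simp)
  have hinl : ∀ f : ℤ →₀ ZMod 2, (inl (ofAdd f) : Lamplighter) ∈ H := by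
    intro f
    induction f using Finsupp.induction with
    | zero => simp
    | single_add p b f _ hb ih =>
      obtain rfl : b = 1 := by revert b; decide
      rw [ofAdd_add, map_mul, inl_single_eq_conj]
      exact mul_mem (mul_mem (mul_mem (hstep p) htoggle) (inv_mem (hstep p))) ih
  refine eq_top_iff.2 fun x _ => ?_
  rw [← inl_left_mul_inr_right x, ← ofAdd_toAdd x.left, ← ofAdd_toAdd x.right,
    inr_ofAdd_eq_step_zpow]
  exact mul_mem (hinl _) (hstep _)

instance : Infinite Lamplighter :=
  Infinite.of_injective inr inr_injective

lemma ext {x y : Lamplighter} (hpos : x.pos = y.pos) (hlamps : x.lamps = y.lamps) :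
    x = y :=
  SemidirectProduct.ext (congrArg ofAdd hlamps) (congrArg ofAdd hpos)

def lampBox (M : ℕ) : Set Lamplighter :=
  {g | g.pos.natAbs ≤ M ∧ ∀ q, g.lamps q ≠ 0 → q.natAbs ≤ M}

lemma lampBox_mono : Monotone lampBox := fun _ _ hMN _ ⟨hpos, hlamps⟩ =>
  ⟨hpos.trans hMN, fun q hq => (hlamps q hq).trans hMN⟩

lemma one_mem_lampBox (M : ℕ) : 1 ∈ lampBox M := ⟨by simp, by simp⟩

lemma mul_mem_lampBox {x y : Lamplighter} {a b : ℕ} (hx : x ∈ lampBox a)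
    (hy : y ∈ lampBox b) : x * y ∈ lampBox (a + b) := by
  obtain ⟨hx_pos, hx_lamps⟩ := hx
  obtain ⟨hy_pos, hy_lamps⟩ := hy
  refine ⟨by simp only [pos_mul]; omega, fun q hq => ?_⟩
  rw [lamps_mul] at hq
  by_cases hxq : x.lamps q = 0
  · have := hy_lamps _ (by simpa [hxq] using hq)
    omega
  · have := hx_lamps q hxq
    omega

lemma list_prod_mem_lampBox {R : ℕ} (w : List Lamplighter) (hw : ∀ g ∈ w, g ∈ lampBox R) :
    w.prod ∈ lampBox (w.length * R) := by
  induction w with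
  | nil => exact one_mem_lampBox _
  | cons g w ih =>
    rw [List.prod_cons, List.length_cons, add_one_mul, add_comm]
    exact mul_mem_lampBox (hw g List.mem_cons_self) (ih fun h hh => hw h (.tail g hh))

lemma pos_inv_mul (x y : Lamplighter) : (x⁻¹ * y).pos = y.pos - x.pos := by
  simp [neg_add_eq_sub]

lemma lamps_inv_mul (x y : Lamplighter) (q : ℤ) :
    (x⁻¹ * y).lamps q = y.lamps (q + x.pos) - x.lamps (q + x.pos) := by
  simp only [lamps_mul, lamps_inv, pos_inv, sub_neg_eq_add]
  abel

lemma inv_mul_mem_lampBox_iff {x y : Lamplighter} {M : ℕ} :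
    x⁻¹ * y ∈ lampBox M ↔
      (y.pos - x.pos).natAbs ≤ M ∧ ∀ q, y.lamps q ≠ x.lamps q → (q - x.pos).natAbs ≤ M := by
  simp only [lampBox, Set.mem_ofPred_eq, pos_inv_mul, lamps_inv_mul, sub_ne_zero]
  refine and_congr_right' ⟨fun h q hq => ?_, fun h q hq => ?_⟩
  · simpa using h (q - x.pos) (by simpa using hq)
  · simpa using h (q + x.pos) hq

lemma exists_mem_lampBox (g : Lamplighter) : ∃ M, g ∈ lampBox M :=
  ⟨max g.pos.natAbs (g.lamps.support.sup Int.natAbs), le_max_left _ _, fun _ hq =>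
    (Finset.le_sup (Finsupp.mem_support_iff.2 hq)).trans (le_max_right _ _)⟩

lemma exists_subset_lampBox {F : Set Lamplighter} (hF : F.Finite) : ∃ R, F ⊆ lampBox R := by
  choose M hM using exists_mem_lampBox
  exact ⟨hF.toFinset.sup M, fun g hg =>
    lampBox_mono (Finset.le_sup (hF.mem_toFinset.2 hg)) (hM g)⟩

lemma finite_lampBox (M : ℕ) : (lampBox M).Finite := by
  let I := Finset.Icc (-(M : ℤ)) M
  refine Set.Finite.of_finite_image (f := fun g => (g.pos, fun q : I => g.lamps q))
    ((Set.finite_Icc (-(M : ℤ)) M).prod Set.finite_univ |>.subset ?_) ?_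
  · rintro _ ⟨g, ⟨hg_pos, -⟩, rfl⟩
    refine ⟨Set.mem_Icc.2 ?_, trivial⟩
    dsimp only
    omega
  · rintro x hx y hy hxy
    simp only [Prod.mk.injEq, funext_iff] at hxy
    refine ext hxy.1 (Finsupp.ext fun q => ?_)
    by_cases hq : q ∈ I
    · exact hxy.2 ⟨q, hq⟩
    · have hx0 : x.lamps q = 0 := by
        by_contra h; exact hq (Finset.mem_Icc.2 (by have := hx.2 q h; omega))
      have hy0 : y.lamps q = 0 := by
        by_contra h; exact hq (Finset.mem_Icc.2 (by have := hy.2 q h; omega))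
      rw [hx0, hy0]

lemma inv_mul_mem_lampBox_of_wordDist_le {S : Set Lamplighter} {R n : ℕ}
    (hgen : Subgroup.closure S = ⊤) (hR : S ∪ S⁻¹ ⊆ lampBox R) {x y : Lamplighter}
    (h : wordDist S x y ≤ n) : x⁻¹ * y ∈ lampBox (n * R) := by
  obtain ⟨w, hw, hprod, hlen⟩ := exists_list_length_eq_wordDist hgen x y
  rw [← hprod]
  exact lampBox_mono (Nat.mul_le_mul_right R (hlen ▸ h))
    (list_prod_mem_lampBox w fun g hg => hR (hw g hg))

section Blocks

variable (L r : ℕ)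

noncomputable def window (k : ℤ) : Finset ℤ := Finset.Icc (L * k - 2 * r) (L * k + L + 2 * r)

noncomputable def block (k : ℤ) (f : ℤ →₀ ZMod 2) : ℤ × (ℤ →₀ ZMod 2) :=
  (k, f.filter (· ∉ window L r k))

noncomputable def blockIndex (x : Lamplighter) : ℤ × (ℤ →₀ ZMod 2) :=
  block L r (x.pos / L) x.lamps

variable {L r}

lemma lamps_eq_of_blockIndex_eq {y y' : Lamplighter} (h : blockIndex L r y = blockIndex L r y')
    {q : ℤ} (hq : q ∉ window L r (y.pos / L)) : y.lamps q = y'.lamps q := by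
  simp only [blockIndex, block, Prod.mk.injEq] at h
  have := DFunLike.congr_fun h.2 q
  rwa [← h.1, Finsupp.filter_apply, Finsupp.filter_apply, if_pos hq, if_pos hq] at this

lemma inv_mul_mem_lampBox_of_blockIndex_eq (hL : 0 < L) {y y' : Lamplighter}
    (h : blockIndex L r y = blockIndex L r y') : y⁻¹ * y' ∈ lampBox (L + 2 * r) := by
  have hk : y.pos / L = y'.pos / L := congrArg Prod.fst h
  have hy := mul_ediv_le_and_lt y.pos (by omega : (0 : ℤ) < L)
  have hy' := mul_ediv_le_and_lt y'.pos (by omega : (0 : ℤ) < L)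
  rw [← hk] at hy'
  refine inv_mul_mem_lampBox_iff.2 ⟨by omega, fun q hq => ?_⟩
  by_cases hw : q ∈ window L r (y.pos / L)
  · simp only [window, Finset.mem_Icc] at hw
    omega
  · exact absurd (lamps_eq_of_blockIndex_eq h hw).symm hq

lemma blockIndex_mem_of_inv_mul_mem_lampBox (hL : 2 * r < L) {x y : Lamplighter}
    (h : x⁻¹ * y ∈ lampBox r) :
    blockIndex L r y ∈ ({(x.pos - r) / L, (x.pos + r) / L} : Finset ℤ).image
      (block L r · x.lamps) := by
  obtain ⟨hpos, hlamps⟩ := inv_mul_mem_lampBox_iff.1 h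
  have hL0 : (0 : ℤ) < L := by omega
  have hy := mul_ediv_le_and_lt y.pos hL0
  have hlow : (x.pos - r) / L ≤ y.pos / L := Int.ediv_le_ediv hL0 (by omega)
  have hhigh : y.pos / L ≤ (x.pos + r) / L := Int.ediv_le_ediv hL0 (by omega)
  -- `[x.pos - r, x.pos + r]` is shorter than a block, so it meets at most two blocks
  have hgap : (x.pos + r) / L ≤ (x.pos - r) / L + 1 := by
    rw [← Int.add_mul_ediv_right _ _ hL0.ne', one_mul]
    exact Int.ediv_le_ediv hL0 (by omega)
  have hk : y.pos / L ∈ ({(x.pos - r) / L, (x.pos + r) / L} : Finset ℤ) := by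
    simp only [Finset.mem_insert, Finset.mem_singleton]
    omega
  refine Finset.mem_image.2 ⟨y.pos / L, hk, ?_⟩
  simp only [blockIndex, block, Prod.mk.injEq, true_and]
  ext q
  by_cases hq : q ∈ window L r (y.pos / L)
  · simp [hq]
  · rw [Finsupp.filter_apply, Finsupp.filter_apply, if_pos hq, if_pos hq]
    simp only [window, Finset.mem_Icc] at hq
    by_contra hne
    have := hlamps q (Ne.symm hne)
    omega

end Blocks

theorem asdimLE_one {S : Set Lamplighter} (hS : S.Finite) (hgen : Subgroup.closure S = ⊤) :
    AsdimLE S 1 := by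
  intro d _
  obtain ⟨R, hR⟩ := exists_subset_lampBox (hS.union hS.inv)
  set r := d * R
  set L := 2 * r + 1
  obtain ⟨D, hD⟩ := ((finite_lampBox (L + 2 * r)).image (wordDist S 1)).bddAbove
  refine ⟨ℤ × (ℤ →₀ ZMod 2), fun i => blockIndex L r ⁻¹' {i}, D, fun x => ⟨_, rfl⟩, ?_, ?_⟩
  · rintro i x rfl y hy
    rw [wordDist_eq_wordDist_one]
    exact hD ⟨_, inv_mul_mem_lampBox_of_blockIndex_eq (by omega) hy.symm, rfl⟩
  · intro x
    refine ⟨({(x.pos - r) / L, (x.pos + r) / L} : Finset ℤ).image (block L r · x.lamps),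
      Finset.card_image_le.trans Finset.card_le_two, ?_⟩
    rintro i ⟨y, rfl, hxy⟩
    exact blockIndex_mem_of_inv_mul_mem_lampBox (by omega)
      (inv_mul_mem_lampBox_of_wordDist_le hgen hR hxy)

end Lamplighter

/-- The lamplighter group is finitely generated and has asymptotic dimension
exactly `1` (with respect to any word metric coming from a finite generating
set). -/
theorem lamplighter_asdim_one :
    (∃ S : Set Lamplighter, S.Finite ∧ Subgroup.closure S = ⊤) ∧
      ∀ S : Set Lamplighter, S.Finite → Subgroup.closure S = ⊤ →
        AsdimLE S 1 ∧ ¬ AsdimLE S 0 :=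
  ⟨⟨_, Set.toFinite _, Lamplighter.closure_toggle_step⟩, fun _ hS hgen =>
    ⟨Lamplighter.asdimLE_one hS hgen, fun h =>
      not_finite_iff_infinite.2 inferInstance (finite_of_asdimLE_zero hS hgen h)⟩⟩
end
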